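/- Tightness of the iteration-number bound: let a and b be two distinct letters, let n, m ∈ ℕ, let σ be the two-action sequence consisting of the write !(a·b^{n+1}) followed by the read ?(b^n), and let x = a^m. Then the least L ∈ ℕ for which there exists ℓ ≤ L with pr[σ^ℓ](x) ⊑ pr[σ^{L+1}](x) is exactly L = m·(n+1). -/

import Mathlib

open List
/-- `wpow u k` is the word `u` concatenated `k` times. -/
def wpow {β : Type*} (u : List β) (k : ℕ) : List β := (List.replicate k u).flatten

/-- Auxiliary residual operation, working on reversed words. -/
def resAux {α : Type*} [DecidableEq α] : List α → List α → List α
  | xr, [] => xr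
  | [], _ :: _ => []
  | a :: xr, b :: vr => if a = b then resAux xr vr else resAux (a :: xr) vr
termination_by xr vr => vr.length

/-- The residual `x / v`: the prefix of `x` obtained by removing from `x`
its longest suffix that is a subword of `v`. -/
def res {α : Type*} [DecidableEq α] (x v : List α) : List α :=
  (resAux x.reverse v.reverse).reverse

inductive Act (α : Type*) where
  | write : List α → Act α
  | read : List α → Act α

/-- written part -/
def wri {α : Type*} : List (Act α) → List α
  | [] => []
  | Act.write w :: σ => w ++ wri σ
  | Act.read _ :: σ => wri σ

/-- read part -/
def rea {α : Type*} : List (Act α) → List α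
  | [] => []
  | Act.write _ :: σ => rea σ
  | Act.read w :: σ => w ++ rea σ

/-- `pr σ x` : minimal `σ`-predecessor of `x` (processing `σ` right-to-left). -/
def pr {α : Type*} [DecidableEq α] : List (Act α) → List α → List α
  | [], x => x
  | Act.write v :: σ, x => res (pr σ x) v
  | Act.read u :: σ, x => u ++ pr σ x

/-- lossy step for a single channel action -/
def stepAct {α : Type*} : Act α → List α → List α → Prop
  | Act.write w, x, y => y <+ x ++ w
  | Act.read w, x, y => w ++ y <+ x

/-- lossy steps along a sequence of channel actions -/
def steps {α : Type*} : List (Act α) → List α → List α → Prop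
  | [], x, y => x = y
  | θ :: σ, x, y => ∃ z, stepAct θ x z ∧ steps σ z y

/-- `w` is a fractional power of `u` -/
def FracPow {α : Type*} (u w : List α) : Prop := ∃ k : ℕ, w <+: wpow u k

/-- `x ⊖ u` : remainder of `x` after reading the leftmost embedding of `u`. -/
def ominus {α : Type*} [DecidableEq α] : List α → List α → List α
  | x, [] => x
  | [], _ :: _ => []
  | a :: x, b :: u => if a = b then ominus x u else ominus x (b :: u)

/-- `σ` is increasing -/
def Increasing {α : Type*} (σ : List (Act α)) : Prop :=
  0 < (wri σ).length ∧
    wpow (rea σ) (wri σ).length <+ wpow (wri σ) ((wri σ).length - 1)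

/-!
Starting from `a^m`, each of the first `m` rounds of `σ` strips the last `a` and prepends `n`
copies of `b`, so `pr[σ^ℓ](a^m) = b^(nℓ) a^(m-ℓ)` for `ℓ ≤ m`; every later round deletes one
`b`, until `ε` is reached after `m + nm` rounds. Along the way the number of `a`'s (first `m`
rounds) or the length (afterwards) strictly drops, so no earlier predecessor is a subword of a
later one before round `m(n+1)`.
-/

section Residual

variable {α : Type*} [DecidableEq α]

lemma resAux_nil_right (xr : List α) : resAux xr [] = xr := by
  cases xr <;> simp [resAux]

lemma resAux_append_append (u xr vr : List α) : resAux (u ++ xr) (u ++ vr) = resAux xr vr := by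
  induction u with
  | nil => rfl
  | cons d u ih => simpa [resAux] using ih

lemma resAux_cons_append_of_not_mem {c : α} {w : List α} (h : c ∉ w) (xr vr : List α) :
    resAux (c :: xr) (w ++ vr) = resAux (c :: xr) vr := by
  induction w with
  | nil => rfl
  | cons d w ih =>
    simp only [mem_cons, not_or] at h
    simpa [resAux, h.1] using ih h.2

@[simp]
lemma res_nil_left (v : List α) : res [] v = [] := by
  cases h : v.reverse <;> simp [res, resAux, h]

@[simp]
lemma res_nil_right (x : List α) : res x [] = x := by
  simp [res, resAux_nil_right]

lemma res_append_append (x u v : List α) : res (x ++ u) (v ++ u) = res x v := by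
  simp [res, resAux_append_append]

lemma res_concat_append_of_not_mem {c : α} {w : List α} (h : c ∉ w) (x v : List α) :
    res (x ++ [c]) (v ++ w) = res (x ++ [c]) v := by
  simpa [res] using congrArg reverse
    (resAux_cons_append_of_not_mem (mt mem_reverse.mp h) x.reverse v.reverse)

lemma res_concat_cons_of_not_mem {c : α} {w : List α} (h : c ∉ w) (x : List α) :
    res (x ++ [c]) (c :: w) = x := by
  rw [show c :: w = [c] ++ w from rfl, res_concat_append_of_not_mem h]
  simpa using res_append_append x [c] []

lemma res_singleton_of_not_mem {c : α} {x : List α} (h : c ∉ x) : res x [c] = x := by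
  rcases eq_nil_or_concat x with rfl | ⟨y, d, rfl⟩
  · simp
  · have hdc : d ∉ [c] := by simp_all [eq_comm]
    simpa using res_concat_append_of_not_mem hdc y []

end Residual

lemma pr_append {α : Type*} [DecidableEq α] (s t : List (Act α)) (x : List α) :
    pr (s ++ t) x = pr s (pr t x) := by
  induction s with
  | nil => rfl
  | cons θ s ih => cases θ <;> simp [pr, ih]

lemma wpow_succ {β : Type*} (u : List β) (k : ℕ) : wpow u (k + 1) = u ++ wpow u k := by
  simp [wpow, replicate_succ]

section TightSequence

variable {α : Type*} [DecidableEq α] {a b : α}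

def tightSeq (a b : α) (n : ℕ) : List (Act α) :=
  [Act.write (a :: replicate (n + 1) b), Act.read (replicate n b)]

lemma pr_tightSeq (n : ℕ) (x : List α) :
    pr (tightSeq a b n) x = res (replicate n b ++ x) (a :: replicate (n + 1) b) := rfl

lemma pr_tightSeq_replicate_append_replicate (hab : a ≠ b) (n k j : ℕ) :
    pr (tightSeq a b n) (replicate k b ++ replicate (j + 1) a)
      = replicate (n + k) b ++ replicate j a := by
  have hx : replicate n b ++ (replicate k b ++ replicate (j + 1) a)
      = (replicate (n + k) b ++ replicate j a) ++ [a] := by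
    rw [← append_assoc, replicate_append_replicate, replicate_succ', append_assoc]
  rw [pr_tightSeq, hx, res_concat_cons_of_not_mem (by simp [hab])]

lemma pr_tightSeq_replicate (hab : a ≠ b) (n k : ℕ) :
    pr (tightSeq a b n) (replicate k b) = replicate (k - 1) b := by
  rw [pr_tightSeq]
  cases k with
  | zero =>
    have hv : a :: replicate (n + 1) b = [a, b] ++ replicate n b := by simp [replicate_succ]
    simpa [hv] using res_append_append [] (replicate n b) [a, b]
  | succ k =>
    have hx : replicate n b ++ replicate (k + 1) b = replicate k b ++ replicate (n + 1) b := by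
      simp only [← replicate_add]; congr 1; omega
    rw [hx, ← singleton_append, res_append_append, res_singleton_of_not_mem (by simp [hab]),
      Nat.add_sub_cancel]

/-- Truncated subtraction lets one formula cover both regimes: `b^(nℓ) a^(m-ℓ)` while `ℓ ≤ m`,
then `b^(nm - (ℓ - m))`. -/
lemma pr_wpow_tightSeq (hab : a ≠ b) (n m ℓ : ℕ) :
    pr (wpow (tightSeq a b n) ℓ) (replicate m a)
      = replicate (n * min ℓ m - (ℓ - m)) b ++ replicate (m - ℓ) a := by
  induction ℓ with
  | zero => simp [wpow, pr]
  | succ ℓ ih =>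
    rw [wpow_succ, pr_append, ih]
    rcases Nat.lt_or_ge ℓ m with hlt | hge
    · rw [show m - ℓ = m - (ℓ + 1) + 1 by omega, pr_tightSeq_replicate_append_replicate hab,
        min_eq_left hlt.le, min_eq_left hlt, Nat.mul_succ]
      congr 2
      omega
    · rw [Nat.sub_eq_zero_of_le hge, Nat.sub_eq_zero_of_le (by omega : m ≤ ℓ + 1),
        replicate_zero, append_nil, append_nil, pr_tightSeq_replicate hab,
        min_eq_right hge, min_eq_right (by omega : m ≤ ℓ + 1)]
      congr 1
      omega

lemma pr_wpow_tightSeq_mul_succ (hab : a ≠ b) (n m : ℕ) :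
    pr (wpow (tightSeq a b n) (m * (n + 1))) (replicate m a) = [] := by
  rw [pr_wpow_tightSeq hab, min_eq_right (Nat.le_mul_of_pos_right m n.succ_pos),
    show m * (n + 1) = n * m + m by ring]
  simp

lemma not_sublist_pr_wpow_tightSeq (hab : a ≠ b) {n m ℓ L : ℕ} (hℓL : ℓ < L)
    (hℓ : ℓ < m * (n + 1)) :
    ¬ pr (wpow (tightSeq a b n) ℓ) (replicate m a) <+
        pr (wpow (tightSeq a b n) L) (replicate m a) := by
  intro hsub
  rw [pr_wpow_tightSeq hab, pr_wpow_tightSeq hab] at hsub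
  rcases Nat.lt_or_ge ℓ m with hlt | hge
  · have hcount := hsub.count_le a
    simp only [count_append, count_replicate, beq_iff_eq, hab.symm, ↓reduceIte,
      count_replicate_self, zero_add] at hcount
    omega
  · have hlen := hsub.length_le
    simp only [length_append, length_replicate, min_eq_right hge,
      min_eq_right (by omega : m ≤ L)] at hlen
    rw [Nat.mul_succ, Nat.mul_comm] at hℓ
    omega

end TightSequence

/-- tightness of the iteration-number bound: for
`σ = !(a·b^{n+1}) ?(b^n)` and `x = a^m`, the iteration number is exactly
`m·(n+1)`. -/
theorem iteration_number_tight {α : Type*} [DecidableEq α]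
    (a b : α) (hab : a ≠ b) (n m : ℕ)
    (σ : List (Act α))
    (hσ : σ = [Act.write (a :: List.replicate (n + 1) b),
               Act.read (List.replicate n b)])
    (x : List α) (hx : x = List.replicate m a) :
    IsLeast {L : ℕ | ∃ ℓ ≤ L, pr (wpow σ ℓ) x <+ pr (wpow σ (L + 1)) x}
      (m * (n + 1)) := by
  obtain rfl : σ = tightSeq a b n := hσ
  subst hx
  refine ⟨⟨m * (n + 1), le_rfl, ?_⟩, ?_⟩
  · rw [pr_wpow_tightSeq_mul_succ hab]
    exact nil_sublist _
  · rintro L ⟨ℓ, hℓL, hsub⟩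
    by_contra! hL
    exact not_sublist_pr_wpow_tightSeq hab (Nat.lt_succ_of_le hℓL) (by omega) hsub
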